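/- Let F be a field of characteristic 0 and δ ∈ F with δ ∉ {−1, 0, 1/2, 1}. Then every δ-derivation of sl₂(F) is zero. -/
import Mathlib


open LieAlgebra.SpecialLinear

def IsDeltaDerivation {F L : Type*} [Field F] [LieRing L] [LieAlgebra F L]
    (δ : F) (φ : L →ₗ[F] L) : Prop :=
  ∀ x y : L, φ ⁅x, y⁆ = δ • (⁅φ x, y⁆ + ⁅x, φ y⁆)

section Aux

variable {F : Type*} [Field F]

private def Esl : sl (Fin 2) F :=
  ⟨!![0,1;0,0], show _ ∈ LinearMap.ker (Matrix.traceLinearMap (Fin 2) F F) by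
    simp [Matrix.trace_fin_two]⟩
private def Fsl : sl (Fin 2) F :=
  ⟨!![0,0;1,0], show _ ∈ LinearMap.ker (Matrix.traceLinearMap (Fin 2) F F) by
    simp [Matrix.trace_fin_two]⟩
private def Hsl : sl (Fin 2) F :=
  ⟨!![1,0;0,-1], show _ ∈ LinearMap.ker (Matrix.traceLinearMap (Fin 2) F F) by
    simp [Matrix.trace_fin_two]⟩

private lemma tr2 (x : sl (Fin 2) F) : x.val 1 1 = - x.val 0 0 := by
  have h : Matrix.trace x.val = 0 := x.2
  rw [Matrix.trace_fin_two] at h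
  linear_combination h

private lemma brkv (x y : sl (Fin 2) F) (i j : Fin 2) :
    (⁅x,y⁆ : sl (Fin 2) F).val i j =
      x.val i 0 * y.val 0 j + x.val i 1 * y.val 1 j
        - (y.val i 0 * x.val 0 j + y.val i 1 * x.val 1 j) := by
  have h : (⁅x,y⁆ : sl (Fin 2) F).val = x.val * y.val - y.val * x.val := rfl
  rw [h]; simp [Matrix.mul_apply, Fin.sum_univ_two]

private lemma smulv (δ : F) (x : sl (Fin 2) F) (i j : Fin 2) :
    (δ • x).val i j = δ * x.val i j := rfl
private lemma addv (x y : sl (Fin 2) F) (i j : Fin 2) :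
    (x + y).val i j = x.val i j + y.val i j := rfl

@[simp] private lemma zerov (i j : Fin 2) : (0 : sl (Fin 2) F).val i j = 0 := rfl

private lemma cancel {c u : F} (hc : c ≠ 0) (h : c * u = 0) : u = 0 :=
  (mul_eq_zero.mp h).resolve_left hc

@[simp] private lemma Ev (i j : Fin 2) : (Esl : sl (Fin 2) F).val i j = !![0,1;0,0] i j := rfl
@[simp] private lemma Fv (i j : Fin 2) : (Fsl : sl (Fin 2) F).val i j = !![0,0;1,0] i j := rfl
@[simp] private lemma Hv (i j : Fin 2) : (Hsl : sl (Fin 2) F).val i j = !![1,0;0,-1] i j := rfl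

private lemma entry_eq {x y : sl (Fin 2) F} (h : x = y) (i j : Fin 2) :
    x.val i j = y.val i j := by rw [h]

private lemma sl2_ext {x y : sl (Fin 2) F} (h01 : x.val 0 1 = y.val 0 1)
    (h10 : x.val 1 0 = y.val 1 0) (h00 : x.val 0 0 = y.val 0 0) : x = y := by
  apply Subtype.ext
  ext i j
  fin_cases i <;> fin_cases j <;>
    simp only [Fin.zero_eta, Fin.mk_one, h01, h10, h00, tr2]

private lemma HEbr : ⁅(Hsl : sl (Fin 2) F), Esl⁆ = (2:F) • (Esl : sl (Fin 2) F) := by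
  apply sl2_ext <;> simp [brkv, smulv] <;> norm_num

private lemma HFbr : ⁅(Hsl : sl (Fin 2) F), Fsl⁆ = (-2:F) • (Fsl : sl (Fin 2) F) := by
  apply sl2_ext <;> simp [brkv, smulv] <;> norm_num

private lemma EFbr : ⁅(Esl : sl (Fin 2) F), Fsl⁆ = (Hsl : sl (Fin 2) F) := by
  apply sl2_ext <;> simp [brkv] <;> norm_num

private lemma sl2_span (x : sl (Fin 2) F) :
    x = x.val 0 1 • Esl + x.val 1 0 • Fsl + x.val 0 0 • Hsl := by
  apply sl2_ext <;> simp [addv, smulv] <;> norm_num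

end Aux

/-- For `δ ∉ {−1, 0, 1/2, 1}` over a field of characteristic 0, every `δ`-derivation of
`sl₂(F)` vanishes. -/
theorem sl2_delta_derivation_eq_zero {F : Type*} [Field F] [CharZero F]
    (δ : F) (h1 : δ ≠ -1) (h2 : δ ≠ 0) (h3 : δ ≠ 1 / 2) (h4 : δ ≠ 1)
    (φ : sl (Fin 2) F →ₗ[F] sl (Fin 2) F) (hφ : IsDeltaDerivation δ φ) :
    φ = 0 := by
  have hδ1 : δ + 1 ≠ 0 := fun h => h1 (by linear_combination h)
  have hδ4 : δ - 1 ≠ 0 := fun h => h4 (by linear_combination h)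
  have hδ3 : 1 - 2*δ ≠ 0 := fun h => h3 (by linear_combination (-(1/2 : F)) * h)
  have h2F : (2:F) ≠ 0 := two_ne_zero
  -- extract scalar equations
  have hHE := hφ Hsl Esl
  rw [HEbr, _root_.map_smul] at hHE
  have e1 := entry_eq hHE 0 1
  have e2 := entry_eq hHE 1 0
  have e3 := entry_eq hHE 0 0
  simp only [smulv, addv, brkv, Ev, Fv, Hv, tr2] at e1 e2 e3
  norm_num at e1 e2 e3
  have hHF := hφ Hsl Fsl
  rw [HFbr, _root_.map_smul] at hHF
  have f1 := entry_eq hHF 0 1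
  have f2 := entry_eq hHF 1 0
  have f3 := entry_eq hHF 0 0
  simp only [smulv, addv, brkv, Ev, Fv, Hv, tr2] at f1 f2 f3
  norm_num at f1 f2 f3
  have hEF := hφ Esl Fsl
  rw [EFbr] at hEF
  have g1 := entry_eq hEF 0 1
  have g2 := entry_eq hEF 1 0
  have g3 := entry_eq hEF 0 0
  simp only [smulv, addv, brkv, Ev, Fv, Hv, tr2] at g1 g2 g3
  norm_num at g1 g2 g3
  -- solve the linear system
  have ha2 : (φ Esl).val 1 0 = 0 :=
    cancel (mul_ne_zero h2F hδ1) (by linear_combination e2)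
  have hb1 : (φ Fsl).val 0 1 = 0 :=
    cancel (mul_ne_zero h2F hδ1) (by linear_combination -f1)
  have ha3 : (φ Esl).val 0 0 = 0 :=
    cancel (mul_ne_zero (mul_ne_zero h2F hδ1) hδ4) (by linear_combination -e3 + δ * g2)
  have hc2 : (φ Hsl).val 1 0 = 0 := by linear_combination g2 - 2*δ*ha3
  have hb3 : (φ Fsl).val 0 0 = 0 :=
    cancel (mul_ne_zero (mul_ne_zero h2F hδ1) hδ4) (by linear_combination f3 + δ * g1)
  have hc1 : (φ Hsl).val 0 1 = 0 := by linear_combination g1 - 2*δ*hb3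
  have hd : (φ Esl).val 0 1 - (φ Fsl).val 1 0 = 0 :=
    cancel (mul_ne_zero h2F hδ4) (by linear_combination -e1 - f2)
  have ha1 : (φ Esl).val 0 1 = 0 :=
    cancel (mul_ne_zero (mul_ne_zero h2F hδ1) hδ3)
      (by linear_combination e1 + 2*δ*g3 - 2*δ^2*hd)
  have hb2 : (φ Fsl).val 1 0 = 0 := by linear_combination ha1 - hd
  have hc3 : (φ Hsl).val 0 0 = 0 := by linear_combination g3 + δ*ha1 + δ*hb2
  have hφE : φ Esl = 0 := sl2_ext (by simpa using ha1) (by simpa using ha2) (by simpa using ha3)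
  have hφF : φ Fsl = 0 := sl2_ext (by simpa using hb1) (by simpa using hb2) (by simpa using hb3)
  have hφH : φ Hsl = 0 := sl2_ext (by simpa using hc1) (by simpa using hc2) (by simpa using hc3)
  ext x
  rw [sl2_span x, map_add, map_add, _root_.map_smul, _root_.map_smul, _root_.map_smul,
    hφE, hφF, hφH]
  simp
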